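/- Let G be a finite connected simple graph on vertex set [n] which is non-bipartite, and let I_G ⊂ S = K[x_1,...,x_n] be its edge ideal. Then depth S/I_G^k = 0 for all k ≥ n-1. -/

import Mathlib

/-!
A connected non-bipartite graph has, for every `k ≥ n - 1`, a closed walk of length `2k - 1`
through all vertices: start from a shortest odd closed walk, which is a cycle and so has at least
as many vertices as edges, attach every missing vertex by a back-and-forth detour along an edge,
and pad with further detours. The product `w` of the variables along such a walk has degree
`2k - 1`, so `w ∉ I_G^k ⊆ m^(2k)`. Rotating the walk to start at a vertex `i` and pairing
consecutive vertices writes `x_i w` as a product of `k` edges, so `m w ⊆ I_G^k` and no element of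
`m` is a nonzerodivisor on `S/I_G^k`.
-/

open MvPolynomial

/-- The edge ideal of a finite simple graph on `Fin n`: the ideal generated by the
monomials `X i * X j` with `{i,j}` an edge of `G`. -/
noncomputable def edgeIdeal (K : Type*) [Field K] {n : ℕ} (G : SimpleGraph (Fin n)) :
    Ideal (MvPolynomial (Fin n) K) :=
  Ideal.span {p | ∃ i j : Fin n, G.Adj i j ∧ p = X i * X j}

/-- The graded maximal ideal `(x_1, …, x_n)` of the polynomial ring. -/
noncomputable def maxIdeal (K : Type*) [Field K] (n : ℕ) : Ideal (MvPolynomial (Fin n) K) :=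
  Ideal.span (Set.range X)

/-- The depth of `S/I` with respect to the graded maximal ideal: the supremum of the
lengths of regular sequences on `S/I` consisting of elements of the maximal ideal. -/
noncomputable def quotDepth (K : Type*) [Field K] {n : ℕ}
    (I : Ideal (MvPolynomial (Fin n) K)) : ℕ :=
  sSup {k | ∃ rs : List (MvPolynomial (Fin n) K), rs.length = k ∧
    (∀ r ∈ rs, r ∈ maxIdeal K n) ∧
    RingTheory.Sequence.IsRegular (MvPolynomial (Fin n) K ⧸ I) rs}

/-- `dstab I`: the smallest power from which on the depth of `S/I^k` stabilizes. -/
noncomputable def dstab (K : Type*) [Field K] {n : ℕ}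
    (I : Ideal (MvPolynomial (Fin n) K)) : ℕ :=
  sInf {k | 1 ≤ k ∧ ∀ l, k ≤ l → quotDepth K (I ^ l) = quotDepth K (I ^ k)}

/-- `astab I`: the smallest power from which on the set of associated primes of
`S/I^k` stabilizes. -/
noncomputable def astab (K : Type*) [Field K] {n : ℕ}
    (I : Ideal (MvPolynomial (Fin n) K)) : ℕ :=
  sInf {k | 1 ≤ k ∧ ∀ l, k ≤ l →
    associatedPrimes (MvPolynomial (Fin n) K) (MvPolynomial (Fin n) K ⧸ (I ^ l)) =
    associatedPrimes (MvPolynomial (Fin n) K) (MvPolynomial (Fin n) K ⧸ (I ^ k))}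

/-- The analytic spread `ℓ(I)`: the Krull dimension of `R(I)/m R(I)`, where `R(I)` is
the Rees algebra of `I` and `m` the graded maximal ideal. -/
noncomputable def analyticSpread (K : Type*) [Field K] {n : ℕ}
    (I : Ideal (MvPolynomial (Fin n) K)) : WithBot (WithTop ℕ) :=
  ringKrullDim ((reesAlgebra I) ⧸
    (Ideal.map (algebraMap (MvPolynomial (Fin n) K) (reesAlgebra I)) (maxIdeal K n)))

/-- The set of minimal monomial generators of a monomial ideal: the (monic) monomials
belonging to `I` but not to `m·I`. -/
def minimalMonGens (K : Type*) [Field K] {n : ℕ}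
    (I : Ideal (MvPolynomial (Fin n) K)) : Set (MvPolynomial (Fin n) K) :=
  {u | (∃ s : Fin n →₀ ℕ, u = monomial s 1) ∧ u ∈ I ∧ u ∉ maxIdeal K n * I}

/-- The linear relation graph `Γ` of a monomial ideal `I`: the vertices `i` and `j`
are adjacent iff there are minimal monomial generators `u, v` of `I` with
`x_i u = x_j v`. -/
noncomputable def linearRelationGraph (K : Type*) [Field K] {n : ℕ}
    (I : Ideal (MvPolynomial (Fin n) K)) : SimpleGraph (Fin n) where
  Adj i j := i ≠ j ∧ ∃ u ∈ minimalMonGens K I, ∃ v ∈ minimalMonGens K I,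
    X i * u = X j * v
  symm := ⟨fun i j ⟨hij, u, hu, v, hv, h⟩ => ⟨hij.symm, v, hv, u, hu, h.symm⟩⟩
  loopless := ⟨fun i ⟨h, _⟩ => h rfl⟩

/-- A star graph: one vertex (the center) is adjacent to all other vertices and
there are no other edges. -/
def IsStarGraph {n : ℕ} (G : SimpleGraph (Fin n)) : Prop :=
  ∃ c : Fin n, ∀ i j : Fin n, G.Adj i j ↔ (i = c ∧ j ≠ c) ∨ (j = c ∧ i ≠ c)

namespace SimpleGraph

variable {V : Type*} {G : SimpleGraph V}

namespace Walk

theorem exists_detour {u v x y : V} (p : G.Walk u v) (hx : x ∈ p.support) (hxy : G.Adj x y) :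
    ∃ q : G.Walk u v, q.length = p.length + 2 ∧
      ∀ z, z ∈ q.support ↔ z ∈ p.support ∨ z = y := by
  classical
  refine ⟨(p.takeUntil x hx).append (cons hxy (cons hxy.symm (p.dropUntil x hx))), ?_,
    fun z => ?_⟩
  · conv_rhs => rw [← p.take_spec hx]
    simp only [length_append, length_cons]
    omega
  · conv_rhs => rw [← p.take_spec hx]
    simp only [mem_support_append_iff, support_cons, List.mem_cons]
    have := (p.dropUntil x hx).start_mem_support
    grind

theorem exists_length_add_two_mul {u v : V} (p : G.Walk u v) (hp : p.length ≠ 0) (m : ℕ) :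
    ∃ q : G.Walk u v, q.length = p.length + 2 * m ∧
      ∀ z, z ∈ q.support ↔ z ∈ p.support := by
  induction m with
  | zero => exact ⟨p, rfl, fun _ => Iff.rfl⟩
  | succ m ih =>
    obtain ⟨q, hlen, hsupp⟩ := ih
    obtain ⟨d, hd⟩ :=
      List.exists_mem_of_length_pos (by rw [length_darts]; omega : 0 < q.darts.length)
    obtain ⟨q', hlen', hsupp'⟩ :=
      q.exists_detour (q.dart_fst_mem_support_of_mem_darts hd) d.adj
    refine ⟨q', by omega, fun z => ?_⟩
    rw [hsupp', ← hsupp, or_iff_left_of_imp]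
    rintro rfl
    exact q.dart_snd_mem_support_of_mem_darts hd

theorem exists_closed_walk_of_not_nodup_support {u v : V} (p : G.Walk u v)
    (hp : ¬ p.support.Nodup) :
    ∃ (q : G.Walk u v) (x : V) (c : G.Walk x x),
      c.length ≠ 0 ∧ p.length = q.length + c.length := by
  classical
  induction p with
  | nil => simp at hp
  | @cons u w v h p ih =>
    rw [support_cons, List.nodup_cons, not_and_or, not_not] at hp
    by_cases hu : u ∈ p.support
    · refine ⟨p.dropUntil u hu, u, cons h (p.takeUntil u hu), by simp, ?_⟩
      conv_lhs => rw [← p.take_spec hu]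
      simp only [length_cons, length_append]
      omega
    · obtain ⟨q, x, c, hc, hlen⟩ := ih (hp.resolve_left hu)
      exact ⟨cons h q, x, c, hc, by simp only [length_cons]; omega⟩

theorem exists_shorter_odd_closed_walk {u : V} (c : G.Walk u u) (hc : Odd c.length)
    (hdup : ¬ c.support.tail.Nodup) :
    ∃ (x : V) (c' : G.Walk x x), Odd c'.length ∧ c'.length < c.length := by
  cases c with
  | nil => simp at hc
  | cons h p =>
    obtain ⟨q, x, c', hc', hlen⟩ :=
      p.exists_closed_walk_of_not_nodup_support (by simpa using hdup)
    rw [length_cons, hlen] at hc ⊢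
    rcases Nat.even_or_odd c'.length with he | ho
    · refine ⟨_, cons h q, ?_, by simp only [length_cons]; omega⟩
      rw [length_cons]
      grind
    · exact ⟨x, c', ho, by omega⟩

end Walk

theorem exists_odd_closed_walk_nodup_support_tail (hnb : ¬ G.Colorable 2) :
    ∃ (u : V) (c : G.Walk u u), Odd c.length ∧ c.support.tail.Nodup := by
  obtain ⟨u, c, hc⟩ : ∃ (u : V) (c : G.Walk u u), Odd c.length := by
    simpa [two_colorable_iff_forall_loop_even] using hnb
  induction hL : c.length using Nat.strong_induction_on generalizing u with
  | _ L ih =>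
    by_cases hnd : c.support.tail.Nodup
    · exact ⟨u, c, hc, hnd⟩
    obtain ⟨x, c', hc', hlt⟩ := c.exists_shorter_odd_closed_walk hc hnd
    exact ih _ (hL ▸ hlt) x c' hc' rfl

theorem Connected.exists_walk_forall_mem_support [Fintype V] [DecidableEq V] (hconn : G.Connected)
    {u v : V} (p : G.Walk u v) :
    ∃ q : G.Walk u v, q.length + 2 * p.support.toFinset.card = p.length + 2 * Fintype.card V ∧
      ∀ z, z ∈ q.support := by
  induction hm : (Finset.univ \ p.support.toFinset).card generalizing p with
  | zero =>
    have hS : p.support.toFinset = Finset.univ := by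
      simpa [Finset.sdiff_eq_empty_iff_subset, Finset.univ_subset_iff] using hm
    exact ⟨p, by simp [hS], fun z => by
      rw [← List.mem_toFinset, hS]; exact Finset.mem_univ z⟩
  | succ m ih =>
    obtain ⟨b, hb⟩ : (Finset.univ \ p.support.toFinset).Nonempty := by
      rw [← Finset.card_pos]; omega
    obtain ⟨d, -, hx, hy⟩ := (hconn.preconnected u b).some.exists_boundary_dart
      {z | z ∈ p.support} p.start_mem_support (by simpa using hb)
    obtain ⟨p', hlen, hsupp⟩ := p.exists_detour hx d.adj
    have hy' : d.snd ∉ p.support.toFinset := by simpa using hy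
    have hS : p'.support.toFinset = insert d.snd p.support.toFinset := by
      ext z; simp [hsupp, or_comm]
    obtain ⟨q, hq, hall⟩ := ih p' (by
      rw [hS, Finset.sdiff_insert, Finset.card_erase_of_mem (by simpa using hy), hm]; rfl)
    refine ⟨q, ?_, hall⟩
    rw [hS, Finset.card_insert_of_notMem hy'] at hq
    omega

theorem Connected.exists_spanning_closed_walk [Fintype V] (hconn : G.Connected)
    (hnb : ¬ G.Colorable 2) {k : ℕ} (hk : Fintype.card V ≤ k + 1) :
    ∃ (u : V) (c : G.Walk u u), c.length + 1 = 2 * k ∧ ∀ z, z ∈ c.support := by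
  classical
  obtain ⟨u, c₀, ⟨a, ha⟩, hnd⟩ := exists_odd_closed_walk_nodup_support_tail hnb
  have hne : c₀.length ≠ 1 := fun h => G.loopless.irrefl u (Walk.adj_of_length_eq_one h)
  have hcard : c₀.length ≤ c₀.support.toFinset.card := calc
    c₀.length = c₀.support.tail.toFinset.card := by
      rw [List.toFinset_card_of_nodup hnd, List.length_tail, Walk.length_support]; rfl
    _ ≤ c₀.support.toFinset.card :=
      Finset.card_le_card (fun _ h => by simpa using List.mem_of_mem_tail (List.mem_toFinset.mp h))
  have hS := Finset.card_le_univ c₀.support.toFinset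
  -- `c₁` has length at most `2 * card V - c₀.length ≤ 2 * card V - 3 ≤ 2 * k - 1`
  obtain ⟨c₁, hlen, hall⟩ := hconn.exists_walk_forall_mem_support c₀
  obtain ⟨c, hc, hsupp⟩ :=
    c₁.exists_length_add_two_mul (by omega) ((2 * k - 1 - c₁.length) / 2)
  exact ⟨u, c, by omega, fun z => (hsupp z).mpr (hall z)⟩

end SimpleGraph

theorem quotDepth_eq_zero_of_X_mul_mem {K : Type*} [Field K] {n : ℕ}
    {I : Ideal (MvPolynomial (Fin n) K)}
    {w : MvPolynomial (Fin n) K} (hw : w ∉ I) (hX : ∀ i, X i * w ∈ I) :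
    quotDepth K I = 0 := by
  have hm : maxIdeal K n ≤ I.colon {w} :=
    Ideal.span_le.mpr (Set.range_subset_iff.mpr fun i => Submodule.mem_colon_singleton.mpr (hX i))
  refine Nat.eq_zero_of_le_zero (csSup_le' ?_)
  rintro _ ⟨_ | ⟨r, rs⟩, rfl, hmem, hreg⟩
  · rfl
  exfalso
  have hr := Submodule.mem_colon_singleton.mp (hm (hmem r List.mem_cons_self))
  refine hw (Ideal.Quotient.eq_zero_iff_mem.mp ?_)
  refine ((RingTheory.Sequence.isRegular_cons_iff _ _ _).mp hreg).1 ?_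
  change Ideal.Quotient.mk I (r • w) = r • 0
  rw [smul_zero]
  exact Ideal.Quotient.eq_zero_iff_mem.mpr hr

section
open SimpleGraph
variable (K : Type*) [Field K] {n : ℕ}

theorem edgeIdeal_le_maxIdeal_sq (G : SimpleGraph (Fin n)) :
    edgeIdeal K G ≤ maxIdeal K n ^ 2 := by
  rw [edgeIdeal, Ideal.span_le]
  rintro _ ⟨i, j, -, rfl⟩
  rw [pow_two]
  exact Ideal.mul_mem_mul (Ideal.subset_span ⟨i, rfl⟩) (Ideal.subset_span ⟨j, rfl⟩)

theorem edgeIdeal_pow_le_maxIdeal_pow (G : SimpleGraph (Fin n)) (k : ℕ) :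
    edgeIdeal K G ^ k ≤ maxIdeal K n ^ (2 * k) := by
  rw [pow_mul]
  exact Ideal.pow_right_mono (edgeIdeal_le_maxIdeal_sq K G) k

theorem prod_map_X_notMem_maxIdeal_pow (l : List (Fin n)) :
    (l.map X).prod ∉ maxIdeal K n ^ (l.length + 1) := by
  obtain ⟨s, hs, hdeg⟩ :
      ∃ s, (l.map X).prod = monomial s (1 : K) ∧ s.degree = l.length := by
    induction l with
    | nil => exact ⟨0, by simp, by simp⟩
    | cons i l ih =>
      obtain ⟨s, hs, hdeg⟩ := ih
      refine ⟨Finsupp.single i 1 + s, by simp [hs, X, monomial_mul], ?_⟩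
      simp [hdeg, add_comm]
  rw [hs]
  exact fun h => by simpa [hdeg] using (monomial_mem_pow_idealOfVars_iff _ s one_ne_zero).mp h

variable {K} {G : SimpleGraph (Fin n)}

theorem X_mul_X_mem_edgeIdeal {i j : Fin n} (h : G.Adj i j) : X i * X j ∈ edgeIdeal K G :=
  Ideal.subset_span ⟨i, j, h, rfl⟩

theorem prod_X_support_mem_edgeIdeal_pow :
    ∀ {u v : Fin n} (p : G.Walk u v),
      (p.support.map X).prod ∈ edgeIdeal K G ^ ((p.length + 1) / 2)
  | _, _, .nil => by simp
  | _, _, .cons h .nil => by simpa using X_mul_X_mem_edgeIdeal h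
  | _, _, .cons h (.cons _ p) => by
    rw [Walk.length_cons, Walk.length_cons,
      show (p.length + 1 + 1 + 1) / 2 = (p.length + 1) / 2 + 1 by omega, pow_succ']
    simpa [mul_assoc] using
      Ideal.mul_mem_mul (X_mul_X_mem_edgeIdeal h) (prod_X_support_mem_edgeIdeal_pow p)

theorem X_mul_prod_X_support_tail_mem_edgeIdeal_pow {u i : Fin n} (c : G.Walk u u)
    (hi : i ∈ c.support) :
    X i * (c.support.tail.map X).prod ∈ edgeIdeal K G ^ ((c.length + 1) / 2) := by
  classical
  have hrot := (c.support_rotate i hi).perm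
  have := prod_X_support_mem_edgeIdeal_pow (K := K) (c.rotate i hi)
  rwa [← Walk.cons_tail_support, List.map_cons, List.prod_cons, (hrot.map X).prod_eq,
    Walk.length_rotate] at this

end

/-- for a connected non-bipartite graph `G` on `n` vertices,
`depth S/I_G^k = 0` for all `k ≥ n - 1`. -/
theorem stmt5 (K : Type*) [Field K] {n : ℕ} (G : SimpleGraph (Fin n))
    (hconn : G.Connected) (hnb : ¬ G.Colorable 2) :
    ∀ k : ℕ, n - 1 ≤ k → quotDepth K ((edgeIdeal K G) ^ k) = 0 := by
  intro k hk
  obtain ⟨u, c, hlen, hall⟩ :=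
    hconn.exists_spanning_closed_walk hnb (k := k) (by rw [Fintype.card_fin]; omega)
  refine quotDepth_eq_zero_of_X_mul_mem (w := (c.support.tail.map X).prod) (fun hw => ?_)
    fun i => ?_
  · apply prod_map_X_notMem_maxIdeal_pow K c.support.tail
    rw [List.length_tail, SimpleGraph.Walk.length_support, Nat.add_sub_cancel, hlen]
    exact edgeIdeal_pow_le_maxIdeal_pow K G k hw
  · simpa [show (c.length + 1) / 2 = k by omega] using
      X_mul_prod_X_support_tail_mem_edgeIdeal_pow c (hall i)
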